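/- Let ρ₀ ∈ L^{3/2}(ℝ²) be nonnegative and radially symmetric, and let U₀(r) = −4∫₀^∞ (s/(r+s)) ρ₀(s) K(2√(rs)/(r+s)) ds be its flat potential. Then there exists C > 0 (depending on ‖ρ₀‖_{L^{3/2}}) such that |U₀(r)| ≤ C·r^{−1/3} for all r > 0. -/

import Mathlib

open MeasureTheory Real Set

/-- The complete elliptic integral of the first kind. -/
noncomputable def ellK (ξ : ℝ) : ℝ :=
  ∫ φ in (0:ℝ)..(π/2), 1 / Real.sqrt (1 - ξ^2 * Real.sin φ ^ 2)

/-!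
Since `1 - ξ² sin² φ` dominates both `1 - ξ²` and `cos² φ ≥ (1 - 2φ/π)²`, it dominates
`(1 - ξ²)^(1/4) (1 - 2φ/π)^(3/2)`, whence `K(ξ) ≤ 2π (1 - ξ²)^(-1/8)`. For
`ξ = 2√(rs)/(r+s)` one has `1 - ξ² = ((s - r)/(r + s))²`, so the integrand of the potential is
at most `2π · s^(2/3) ρ₀(s) · w(r, s)^(1/3)` with `w(r, s) = s (r+s)^(-9/4) |s-r|^(-3/4)`
(`potentialWeight`).
Hölder's inequality with exponents `3/2` and `3` bounds the potential by
`8π ‖s ρ₀^(3/2)‖₁^(2/3) ‖w(r, ·)‖₁^(1/3)`, and since `w` is homogeneous of degree `-2`,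
`‖w(r, ·)‖₁ = r⁻¹ ‖w(1, ·)‖₁`, which is finite: the singularity at `s = r` is integrable and
`w(1, s) = O(s⁻²)` at infinity.
-/

lemma intervalIntegrable_abs_rpow {r : ℝ} (hr : -1 < r) (a b : ℝ) :
    IntervalIntegrable (fun x => |x| ^ r) volume a b := by
  have hnonneg : ∀ c, 0 ≤ c → IntervalIntegrable (fun x => |x| ^ r) volume 0 c := fun c hc =>
    (intervalIntegral.intervalIntegrable_rpow' hr).congr fun x hx => by
      rw [uIoc_of_le hc] at hx
      simp only [abs_of_pos hx.1]
  have hzero : ∀ c, IntervalIntegrable (fun x => |x| ^ r) volume 0 c := by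
    intro c
    rcases le_total 0 c with hc | hc
    · exact hnonneg c hc
    · rw [IntervalIntegrable.iff_comp_neg]
      simpa using hnonneg (-c) (by linarith)
  exact (hzero a).symm.trans (hzero b)

lemma memLp_ofReal_of_integrable_rpow {α : Type*} [MeasurableSpace α] {μ : Measure α}
    {f : α → ℝ} {p : ℝ} (hp : 0 < p) (hf : AEStronglyMeasurable f μ) (hf0 : 0 ≤ᵐ[μ] f)
    (hint : Integrable (fun x => f x ^ p) μ) : MemLp f (ENNReal.ofReal p) μ := by
  refine (integrable_norm_rpow_iff hf (by simpa using hp) ENNReal.ofReal_ne_top).1 ?_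
  rw [ENNReal.toReal_ofReal hp.le]
  refine hint.congr ?_
  filter_upwards [hf0] with x hx
  rw [Real.norm_of_nonneg hx]

lemma abs_integral_le_Lp_mul_Lq_of_abs_le {α : Type*} [MeasurableSpace α] {μ : Measure α}
    {p q : ℝ} (hpq : p.HolderConjugate q) {F f g : α → ℝ} {c : ℝ} (hc : 0 ≤ c)
    (hf0 : 0 ≤ᵐ[μ] f) (hg0 : 0 ≤ᵐ[μ] g)
    (hf : MemLp f (ENNReal.ofReal p) μ) (hg : MemLp g (ENNReal.ofReal q) μ)
    (hF : ∀ᵐ x ∂μ, |F x| ≤ c * (f x * g x)) :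
    |∫ x, F x ∂μ| ≤ c * ((∫ x, f x ^ p ∂μ) ^ (1 / p) * (∫ x, g x ^ q ∂μ) ^ (1 / q)) := by
  have := hpq.ennrealOfReal
  calc |∫ x, F x ∂μ| ≤ ∫ x, |F x| ∂μ := abs_integral_le_integral_abs
    _ ≤ ∫ x, c * (f x * g x) ∂μ := integral_mono_of_nonneg (.of_forall fun _ => abs_nonneg _)
        ((hf.integrable_mul hg).const_mul c) hF
    _ ≤ _ := by
        rw [integral_const_mul]
        exact mul_le_mul_of_nonneg_left (integral_mul_le_Lp_mul_Lq_of_nonneg hpq hf0 hg0 hf hg) hc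

lemma one_div_sqrt_le_rpow_mul_rpow {x a c : ℝ} (ha : 0 < a) (hc : 0 < c) (hax : a ≤ x)
    (hcx : c ^ 2 ≤ x) : 1 / √x ≤ a ^ (-(1:ℝ)/8) * c ^ (-(3:ℝ)/4) := by
  have hx : 0 < x := ha.trans_le hax
  have hc2 : (c ^ 2) ^ (-(3:ℝ)/8) = c ^ (-(3:ℝ)/4) := by
    rw [← rpow_natCast, ← rpow_mul hc.le]; norm_num
  calc 1 / √x = x ^ (-(1:ℝ)/8) * x ^ (-(3:ℝ)/8) := by
        rw [← rpow_add hx, sqrt_eq_rpow, one_div, ← rpow_neg hx.le]; norm_num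
    _ ≤ a ^ (-(1:ℝ)/8) * (c ^ 2) ^ (-(3:ℝ)/8) := by
        gcongr ?_ * ?_
        · exact rpow_le_rpow_of_nonpos ha hax (by norm_num)
        · exact rpow_le_rpow_of_nonpos (by positivity) hcx (by norm_num)
    _ = a ^ (-(1:ℝ)/8) * c ^ (-(3:ℝ)/4) := by rw [hc2]

lemma integral_one_sub_two_div_pi_mul_rpow :
    ∫ φ in (0:ℝ)..(π/2), (1 - 2/π * φ) ^ (-(3:ℝ)/4) = 2 * π := by
  rw [intervalIntegral.integral_comp_sub_mul (fun u => u ^ (-(3:ℝ)/4)) (by positivity),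
    integral_rpow (Or.inl (by norm_num))]
  norm_num
  ring

lemma abs_ellK_le {ξ : ℝ} (hξ : ξ ^ 2 < 1) : |ellK ξ| ≤ 2 * π * (1 - ξ ^ 2) ^ (-(1:ℝ)/8) := by
  have hbound : IntervalIntegrable (fun φ => (1 - 2/π * φ) ^ (-(3:ℝ)/4)) volume 0 (π/2) :=
    intervalIntegral.intervalIntegrable_of_integral_ne_zero
      (by rw [integral_one_sub_two_div_pi_mul_rpow]; positivity)
  rw [← Real.norm_eq_abs, ← integral_one_sub_two_div_pi_mul_rpow, mul_comm,
    ← intervalIntegral.integral_const_mul]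
  refine intervalIntegral.norm_integral_le_of_norm_le (by positivity) ?_ (hbound.const_mul _)
  filter_upwards [(countable_singleton (π/2)).ae_notMem volume] with φ hne hφ
  have hjordan : 1 - 2/π * φ ≤ cos φ := one_sub_mul_le_cos hφ.1.le hφ.2
  have hpos : 0 < 1 - 2/π * φ := by
    have : φ < π/2 := lt_of_le_of_ne hφ.2 hne
    rw [sub_pos, div_mul_eq_mul_div, div_lt_one pi_pos]
    linarith
  rw [Real.norm_of_nonneg (by positivity)]
  apply one_div_sqrt_le_rpow_mul_rpow (by linarith) hpos
  · nlinarith [sin_sq_le_one φ]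
  · nlinarith [sin_sq_add_cos_sq φ, sq_nonneg (sin φ)]

lemma one_sub_sq_ellModulus {r s : ℝ} (hr : 0 < r) (hs : 0 < s) :
    1 - (2 * √(r * s) / (r + s)) ^ 2 = ((s - r) / (r + s)) ^ 2 := by
  have hrs : r + s ≠ 0 := by positivity
  rw [div_pow, div_pow, mul_pow, sq_sqrt (by positivity)]
  field_simp
  ring

noncomputable def potentialWeight (r s : ℝ) : ℝ :=
  s * (r + s) ^ (-(9:ℝ)/4) * |s - r| ^ (-(3:ℝ)/4)

lemma potentialWeight_nonneg {r s : ℝ} (hr : 0 ≤ r) (hs : 0 ≤ s) : 0 ≤ potentialWeight r s := by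
  unfold potentialWeight; positivity

lemma measurable_potentialWeight (r : ℝ) : Measurable (potentialWeight r) := by
  unfold potentialWeight; fun_prop

lemma rpow_mul_potentialWeight_rpow_eq {r s : ℝ} (hr : 0 < r) (hs : 0 < s) (hsr : s ≠ r) :
    s ^ ((2:ℝ)/3) * potentialWeight r s ^ ((1:ℝ)/3)
      = s / (r + s) * (((s - r) / (r + s)) ^ 2) ^ (-(1:ℝ)/8) := by
  have hb : 0 < r + s := by positivity
  have ha : 0 < |s - r| := abs_pos.mpr (sub_ne_zero.mpr hsr)
  have hcube : potentialWeight r s ^ ((1:ℝ)/3)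
      = s ^ ((1:ℝ)/3) * (r + s) ^ (-(3:ℝ)/4) * |s - r| ^ (-(1:ℝ)/4) := by
    rw [potentialWeight, mul_rpow (by positivity) (by positivity), mul_rpow hs.le (by positivity),
      ← rpow_mul hb.le, ← rpow_mul ha.le]
    norm_num
  have hsq : (((s - r) / (r + s)) ^ 2) ^ (-(1:ℝ)/8)
      = |s - r| ^ (-(1:ℝ)/4) * (r + s) ^ ((1:ℝ)/4) := by
    rw [← sq_abs, abs_div, abs_of_pos hb, ← rpow_natCast, ← rpow_mul (by positivity),
      div_rpow ha.le hb.le, div_eq_mul_inv, ← rpow_neg hb.le]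
    norm_num
  rw [hcube, hsq]
  calc s ^ ((2:ℝ)/3) * (s ^ ((1:ℝ)/3) * (r + s) ^ (-(3:ℝ)/4) * |s - r| ^ (-(1:ℝ)/4))
      = (s ^ ((2:ℝ)/3) * s ^ ((1:ℝ)/3)) * (r + s) ^ (-(3:ℝ)/4) * |s - r| ^ (-(1:ℝ)/4) := by
        ring
    _ = s * ((r + s) ^ (-(1:ℝ)) * (r + s) ^ ((1:ℝ)/4)) * |s - r| ^ (-(1:ℝ)/4) := by
        rw [← rpow_add hb, ← rpow_add hs]; norm_num
    _ = s / (r + s) * (|s - r| ^ (-(1:ℝ)/4) * (r + s) ^ ((1:ℝ)/4)) := by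
        rw [rpow_neg_one]; ring

lemma abs_div_mul_ellK_le {r s : ℝ} (hr : 0 < r) (hs : 0 < s) (hsr : s ≠ r) :
    |s / (r + s) * ellK (2 * √(r * s) / (r + s))|
      ≤ 2 * π * (s ^ ((2:ℝ)/3) * potentialWeight r s ^ ((1:ℝ)/3)) := by
  have hmod := one_sub_sq_ellModulus hr hs
  have hξ : (2 * √(r * s) / (r + s)) ^ 2 < 1 := by
    have : s - r ≠ 0 := sub_ne_zero.mpr hsr
    have : 0 < ((s - r) / (r + s)) ^ 2 := by positivity
    linarith
  calc |s / (r + s) * ellK (2 * √(r * s) / (r + s))|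
      = s / (r + s) * |ellK (2 * √(r * s) / (r + s))| := by
        rw [abs_mul, abs_of_pos (by positivity)]
    _ ≤ s / (r + s) * (2 * π * (((s - r) / (r + s)) ^ 2) ^ (-(1:ℝ)/8)) := by
        rw [← hmod]; gcongr; exact abs_ellK_le hξ
    _ = 2 * π * (s ^ ((2:ℝ)/3) * potentialWeight r s ^ ((1:ℝ)/3)) := by
        rw [rpow_mul_potentialWeight_rpow_eq hr hs hsr]; ring

lemma potentialWeight_self_mul {r : ℝ} (hr : 0 < r) {t : ℝ} (ht : 0 ≤ t) :
    potentialWeight r (r * t) = r ^ (-(2:ℝ)) * potentialWeight 1 t := by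
  have hsum : r + r * t = r * (1 + t) := by ring
  have hdiff : |r * t - r| = r * |t - 1| := by
    rw [show r * t - r = r * (t - 1) by ring, abs_mul, abs_of_pos hr]
  have hpow : r ^ (-(2:ℝ)) = r * r ^ (-(9:ℝ)/4) * r ^ (-(3:ℝ)/4) := by
    rw [mul_assoc, ← rpow_add hr, ← rpow_one_add' hr.le (by norm_num)]; norm_num
  rw [potentialWeight, potentialWeight, hsum, hdiff, mul_rpow hr.le (by positivity),
    mul_rpow hr.le (abs_nonneg _), hpow]
  ring

lemma potentialWeight_one_le_abs_sub_rpow {t : ℝ} (ht : 0 ≤ t) :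
    potentialWeight 1 t ≤ |t - 1| ^ (-(3:ℝ)/4) := by
  have hfactor : t * (1 + t) ^ (-(9:ℝ)/4) ≤ 1 :=
    calc t * (1 + t) ^ (-(9:ℝ)/4) ≤ (1 + t) * (1 + t) ^ (-(1:ℝ)) :=
          mul_le_mul (by linarith) (rpow_le_rpow_of_exponent_le (by linarith) (by norm_num))
            (by positivity) (by positivity)
      _ = 1 := by rw [rpow_neg_one, mul_inv_cancel₀ (by positivity)]
  exact mul_le_of_le_one_left (by positivity) hfactor

lemma potentialWeight_one_le_rpow {t : ℝ} (ht : 2 ≤ t) :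
    potentialWeight 1 t ≤ 2 ^ ((3:ℝ)/4) * t ^ (-(2:ℝ)) := by
  have ht0 : 0 < t := by linarith
  have habs : t / 2 ≤ |t - 1| := by rw [abs_of_pos (by linarith)]; linarith
  have htwo : (2:ℝ) ^ (-(3:ℝ)/4) = (2 ^ ((3:ℝ)/4))⁻¹ := by
    rw [← rpow_neg zero_le_two]; norm_num
  calc potentialWeight 1 t ≤ t * t ^ (-(9:ℝ)/4) * (t / 2) ^ (-(3:ℝ)/4) := by
        unfold potentialWeight
        gcongr t * ?_ * ?_
        · exact rpow_le_rpow_of_nonpos ht0 (by linarith) (by norm_num)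
        · exact rpow_le_rpow_of_nonpos (by positivity) habs (by norm_num)
    _ = 2 ^ ((3:ℝ)/4) * (t ^ (1:ℝ) * t ^ (-(9:ℝ)/4) * t ^ (-(3:ℝ)/4)) := by
        rw [div_rpow ht0.le zero_le_two, htwo, rpow_one]
        field_simp
    _ = 2 ^ ((3:ℝ)/4) * t ^ (-(2:ℝ)) := by
        rw [← rpow_add ht0, ← rpow_add ht0]; norm_num

lemma integrableOn_potentialWeight_one : IntegrableOn (potentialWeight 1) (Ioi 0) := by
  rw [← Ioc_union_Ioi_eq_Ioi (by norm_num : (0:ℝ) ≤ 2)]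
  refine IntegrableOn.union ?_ ?_
  · have hsing : IntervalIntegrable (fun t => |t - 1| ^ (-(3:ℝ)/4)) volume 0 2 := by
      convert (intervalIntegrable_abs_rpow (r := -(3:ℝ)/4) (by norm_num) (-1) 1).comp_sub_right 1
        using 1 <;> norm_num
    refine Integrable.mono' ((intervalIntegrable_iff_integrableOn_Ioc_of_le (by norm_num)).1 hsing)
      (measurable_potentialWeight 1).aestronglyMeasurable ?_
    filter_upwards [ae_restrict_mem measurableSet_Ioc] with t ht
    rw [Real.norm_of_nonneg (potentialWeight_nonneg zero_le_one ht.1.le)]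
    exact potentialWeight_one_le_abs_sub_rpow ht.1.le
  · have hdecay : IntegrableOn (fun t : ℝ => 2 ^ ((3:ℝ)/4) * t ^ (-(2:ℝ))) (Ioi 2) :=
      (integrableOn_Ioi_rpow_of_lt (by norm_num) (by norm_num)).const_mul _
    refine Integrable.mono' hdecay (measurable_potentialWeight 1).aestronglyMeasurable ?_
    filter_upwards [ae_restrict_mem measurableSet_Ioi] with t ht
    have ht2 : 2 ≤ t := le_of_lt ht
    rw [Real.norm_of_nonneg (potentialWeight_nonneg zero_le_one (by linarith))]
    exact potentialWeight_one_le_rpow ht2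

lemma integrableOn_potentialWeight {r : ℝ} (hr : 0 < r) :
    IntegrableOn (potentialWeight r) (Ioi 0) := by
  have hscaled : IntegrableOn (fun t => potentialWeight r (r * t)) (Ioi 0) :=
    IntegrableOn.congr_fun (integrableOn_potentialWeight_one.const_mul (r ^ (-(2:ℝ))))
      (fun t ht => (potentialWeight_self_mul hr (le_of_lt ht)).symm) measurableSet_Ioi
  simpa using (integrableOn_Ioi_comp_mul_left_iff (potentialWeight r) 0 hr).1 hscaled

lemma integral_potentialWeight {r : ℝ} (hr : 0 < r) :
    ∫ s in Ioi 0, potentialWeight r s = r⁻¹ * ∫ t in Ioi 0, potentialWeight 1 t := by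
  have hscaled := integral_comp_mul_left_Ioi' (potentialWeight r) 0 hr
  rw [mul_zero, setIntegral_congr_fun measurableSet_Ioi
    (fun t ht => potentialWeight_self_mul hr (le_of_lt ht)), integral_const_mul] at hscaled
  rw [← hscaled, smul_eq_mul, ← mul_assoc, ← rpow_one_add' hr.le (by norm_num), ← rpow_neg_one]
  norm_num

lemma abs_integral_potential_le {ρ₀ : ℝ → ℝ} (hmeas : Measurable ρ₀) (hpos : ∀ s, 0 ≤ ρ₀ s)
    (hL32 : IntegrableOn (fun s => s * ρ₀ s ^ ((3:ℝ)/2)) (Ioi 0)) {r : ℝ} (hr : 0 < r) :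
    |∫ s in Ioi (0:ℝ), (s/(r+s)) * ρ₀ s * ellK (2 * Real.sqrt (r*s) / (r+s))|
      ≤ 2 * π * ((∫ s in Ioi (0:ℝ), s * ρ₀ s ^ ((3:ℝ)/2)) ^ ((2:ℝ)/3)
        * (∫ s in Ioi (0:ℝ), potentialWeight r s) ^ ((1:ℝ)/3)) := by
  set f : ℝ → ℝ := fun s => s ^ ((2:ℝ)/3) * ρ₀ s
  set g : ℝ → ℝ := fun s => potentialWeight r s ^ ((1:ℝ)/3)
  have hf_pow : ∀ s ∈ Ioi (0:ℝ), f s ^ ((3:ℝ)/2) = s * ρ₀ s ^ ((3:ℝ)/2) := fun s hs => by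
    rw [mul_rpow (rpow_nonneg (le_of_lt hs) _) (hpos s), ← rpow_mul (le_of_lt hs)]; norm_num
  have hg_pow : ∀ s ∈ Ioi (0:ℝ), g s ^ (3:ℝ) = potentialWeight r s := fun s hs => by
    rw [← rpow_mul (potentialWeight_nonneg hr.le (le_of_lt hs))]; norm_num
  have hf0 : 0 ≤ᵐ[volume.restrict (Ioi 0)] f := by
    filter_upwards [ae_restrict_mem measurableSet_Ioi] with s hs
    exact mul_nonneg (rpow_nonneg (le_of_lt hs) _) (hpos s)
  have hg0 : 0 ≤ᵐ[volume.restrict (Ioi 0)] g := by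
    filter_upwards [ae_restrict_mem measurableSet_Ioi] with s hs
    exact rpow_nonneg (potentialWeight_nonneg hr.le (le_of_lt hs)) _
  have hf : MemLp f (ENNReal.ofReal (3/2)) (volume.restrict (Ioi 0)) :=
    memLp_ofReal_of_integrable_rpow (by norm_num) (by fun_prop) hf0
      (hL32.congr_fun (fun s hs => (hf_pow s hs).symm) measurableSet_Ioi)
  have hg : MemLp g (ENNReal.ofReal 3) (volume.restrict (Ioi 0)) :=
    memLp_ofReal_of_integrable_rpow (by norm_num)
      ((measurable_potentialWeight r).pow_const _).aestronglyMeasurable hg0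
      ((integrableOn_potentialWeight hr).congr_fun (fun s hs => (hg_pow s hs).symm)
        measurableSet_Ioi)
  have hF : ∀ᵐ s ∂(volume.restrict (Ioi 0)),
      |(s/(r+s)) * ρ₀ s * ellK (2 * Real.sqrt (r*s) / (r+s))| ≤ 2 * π * (f s * g s) := by
    filter_upwards [ae_restrict_mem measurableSet_Ioi,
      ae_restrict_of_ae ((countable_singleton r).ae_notMem volume)] with s hs hsr
    calc |(s/(r+s)) * ρ₀ s * ellK (2 * Real.sqrt (r*s) / (r+s))|
        = ρ₀ s * |s / (r + s) * ellK (2 * √(r * s) / (r + s))| := by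
          rw [mul_right_comm, abs_mul, abs_of_nonneg (hpos s), mul_comm]
      _ ≤ ρ₀ s * (2 * π * (s ^ ((2:ℝ)/3) * g s)) :=
          mul_le_mul_of_nonneg_left (abs_div_mul_ellK_le hr hs hsr) (hpos s)
      _ = 2 * π * (f s * g s) := by ring
  have hholder : (3/2 : ℝ).HolderConjugate 3 :=
    Real.holderConjugate_iff.2 ⟨by norm_num, by norm_num⟩
  have := abs_integral_le_Lp_mul_Lq_of_abs_le hholder (by positivity) hf0 hg0 hf hg hF
  rwa [setIntegral_congr_fun measurableSet_Ioi hf_pow,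
    setIntegral_congr_fun measurableSet_Ioi hg_pow, show (1:ℝ) / (3/2) = 2/3 by norm_num] at this

theorem radial_potential_decay (ρ₀ : ℝ → ℝ)
    (hmeas : Measurable ρ₀) (hpos : ∀ s, 0 ≤ ρ₀ s)
    (hL32 : IntegrableOn (fun s => s * ρ₀ s ^ ((3:ℝ)/2)) (Ioi 0)) :
    ∃ C : ℝ, 0 < C ∧ ∀ r : ℝ, 0 < r →
      |(-4 * ∫ s in Ioi (0:ℝ),
          (s/(r+s)) * ρ₀ s * ellK (2 * Real.sqrt (r*s) / (r+s)) : ℝ)| ≤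
        C * r ^ (-(1:ℝ)/3) := by
  set I := ∫ s in Ioi (0:ℝ), s * ρ₀ s ^ ((3:ℝ)/2)
  set J := ∫ t in Ioi (0:ℝ), potentialWeight 1 t
  have hI : 0 ≤ I := setIntegral_nonneg measurableSet_Ioi
    fun s hs => mul_nonneg (le_of_lt hs) (rpow_nonneg (hpos s) _)
  have hJ : 0 ≤ J := setIntegral_nonneg measurableSet_Ioi
    fun t ht => potentialWeight_nonneg zero_le_one (le_of_lt ht)
  refine ⟨8 * π * I ^ ((2:ℝ)/3) * J ^ ((1:ℝ)/3) + 1, by positivity, fun r hr => ?_⟩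
  have hbound := abs_integral_potential_le hmeas hpos hL32 hr
  rw [integral_potentialWeight hr] at hbound
  calc |(-4 * ∫ s in Ioi (0:ℝ), (s/(r+s)) * ρ₀ s * ellK (2 * Real.sqrt (r*s) / (r+s)) : ℝ)|
      = 4 * |∫ s in Ioi (0:ℝ), (s/(r+s)) * ρ₀ s * ellK (2 * Real.sqrt (r*s) / (r+s))| := by
        rw [abs_mul]; norm_num
    _ ≤ 4 * (2 * π * (I ^ ((2:ℝ)/3) * (r⁻¹ * J) ^ ((1:ℝ)/3))) := by gcongr
    _ = 8 * π * I ^ ((2:ℝ)/3) * J ^ ((1:ℝ)/3) * r ^ (-(1:ℝ)/3) := by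
        rw [mul_rpow (inv_nonneg.2 hr.le) hJ, inv_rpow hr.le, ← rpow_neg hr.le, neg_div]; ring
    _ ≤ (8 * π * I ^ ((2:ℝ)/3) * J ^ ((1:ℝ)/3) + 1) * r ^ (-(1:ℝ)/3) := by
        gcongr; linarith
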